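/- arXiv:1212.1200 — 5 statements merged into one kernel-verified Lean document; each statement's English description precedes it below -/
import Mathlib

section
/- For the 2×2×2 hyperdeterminant Δ and any 2×2×2 complex tensor P and matrices g1, g2, g3 ∈ GL(2,ℂ), we have Δ(P · (g1,g2,g3)) = det(g1)² det(g2)² det(g3)² Δ(P), where P · (g1,g2,g3) denotes the natural multilinear action of matrices on each index of the tensor. -/
open Matrix BigOperators

/-- Cayley's 2×2×2 hyperdeterminant. -/
noncomputable def hyperdet (A : Fin 2 → Fin 2 → Fin 2 → ℂ) : ℂ :=
  ((A 0 0 0)^2 * (A 1 1 1)^2 + (A 0 0 1)^2 * (A 1 1 0)^2 +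
   (A 0 1 0)^2 * (A 1 0 1)^2 + (A 0 1 1)^2 * (A 1 0 0)^2)
  - 2 * (A 0 0 0 * A 0 0 1 * A 1 1 0 * A 1 1 1
       + A 0 0 0 * A 0 1 0 * A 1 0 1 * A 1 1 1
       + A 0 0 0 * A 0 1 1 * A 1 0 0 * A 1 1 1
       + A 0 0 1 * A 0 1 0 * A 1 0 1 * A 1 1 0
       + A 0 0 1 * A 0 1 1 * A 1 1 0 * A 1 0 0
       + A 0 1 0 * A 0 1 1 * A 1 0 1 * A 1 0 0)
  + 4 * (A 0 0 0 * A 0 1 1 * A 1 0 1 * A 1 1 0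
       + A 0 0 1 * A 0 1 0 * A 1 0 0 * A 1 1 1)

/-- The multilinear action of three matrices on a 2×2×2 tensor. -/
noncomputable def tensorAct (P : Fin 2 → Fin 2 → Fin 2 → ℂ)
    (g1 g2 g3 : Matrix (Fin 2) (Fin 2) ℂ) : Fin 2 → Fin 2 → Fin 2 → ℂ :=
  fun i j k => ∑ a, ∑ b, ∑ c, P a b c * g1 a i * g2 b j * g3 c k

lemma act1 (P : Fin 2 → Fin 2 → Fin 2 → ℂ) (g : Matrix (Fin 2) (Fin 2) ℂ) :
    hyperdet (tensorAct P g 1 1) = g.det ^ 2 * hyperdet P := by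
  simp only [hyperdet, tensorAct, Fin.sum_univ_two, Matrix.one_apply, Matrix.det_fin_two]
  norm_num
  ring

lemma act2 (P : Fin 2 → Fin 2 → Fin 2 → ℂ) (g : Matrix (Fin 2) (Fin 2) ℂ) :
    hyperdet (tensorAct P 1 g 1) = g.det ^ 2 * hyperdet P := by
  simp only [hyperdet, tensorAct, Fin.sum_univ_two, Matrix.one_apply, Matrix.det_fin_two]
  norm_num
  ring

lemma act3 (P : Fin 2 → Fin 2 → Fin 2 → ℂ) (g : Matrix (Fin 2) (Fin 2) ℂ) :
    hyperdet (tensorAct P 1 1 g) = g.det ^ 2 * hyperdet P := by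
  simp only [hyperdet, tensorAct, Fin.sum_univ_two, Matrix.one_apply, Matrix.det_fin_two]
  norm_num
  ring

lemma act_comp (P : Fin 2 → Fin 2 → Fin 2 → ℂ) (g1 g2 g3 : Matrix (Fin 2) (Fin 2) ℂ) :
    tensorAct P g1 g2 g3 = tensorAct (tensorAct (tensorAct P g1 1 1) 1 g2 1) 1 1 g3 := by
  funext i j k
  fin_cases i <;> fin_cases j <;> fin_cases k <;>
    · simp only [tensorAct, Fin.sum_univ_two, Matrix.one_apply]
      norm_num
      ring

theorem stmt_0 (P : Fin 2 → Fin 2 → Fin 2 → ℂ)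
    (g1 g2 g3 : Matrix (Fin 2) (Fin 2) ℂ)
    (h1 : IsUnit g1.det) (h2 : IsUnit g2.det) (h3 : IsUnit g3.det) :
    hyperdet (tensorAct P g1 g2 g3) =
      g1.det ^ 2 * g2.det ^ 2 * g3.det ^ 2 * hyperdet P := by
  rw [act_comp, act3, act2, act1]
  ring
end

section
/- Let P = Diag(π) · (M1, M2, M3) be a k×k×k tensor with M1, M2, M3 invertible k×k complex matrices and π ∈ ℂᵏ. Writing P_{··+} = P*₃𝟙 = M1ᵀ diag(π) M2, P_{·+·} = P*₂𝟙 = M1ᵀ diag(π) M3, and P_{+··} = P*₁𝟙 = M2ᵀ diag(π) M3, if P_{··+} is invertible then P_{+··}ᵀ (P_{··+})⁻¹ P_{·+·} = M3ᵀ diag(π) M3; in particular, this matrix is symmetric. -/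
open Matrix BigOperators

theorem stmt_2 (k : ℕ) (π : Fin k → ℂ) (M1 M2 M3 : Matrix (Fin k) (Fin k) ℂ)
    (hM1 : IsUnit M1.det) (hM2 : IsUnit M2.det) (hM3 : IsUnit M3.det)
    (hr1 : ∀ a, ∑ i, M1 a i = 1) (hr2 : ∀ a, ∑ j, M2 a j = 1)
    (hr3 : ∀ a, ∑ ℓ, M3 a ℓ = 1)
    (P : Fin k → Fin k → Fin k → ℂ)
    (hP : ∀ i j ℓ, P i j ℓ = ∑ a, π a * M1 a i * M2 a j * M3 a ℓ)
    (Pccp Pcpc Ppcc : Matrix (Fin k) (Fin k) ℂ)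
    (hPccp : Pccp = Matrix.of fun i j => ∑ ℓ, P i j ℓ)
    (hPcpc : Pcpc = Matrix.of fun i ℓ => ∑ j, P i j ℓ)
    (hPpcc : Ppcc = Matrix.of fun j ℓ => ∑ i, P i j ℓ)
    (hinv : IsUnit Pccp.det) :
    Ppccᵀ * Pccp⁻¹ * Pcpc = M3ᵀ * Matrix.diagonal π * M3 ∧
      (Ppccᵀ * Pccp⁻¹ * Pcpc).IsSymm := by
  set D := Matrix.diagonal π with hD
  have hA : Pccp = M1ᵀ * D * M2 := by
    subst hPccp
    ext i j
    simp only [Matrix.of_apply, hP, Matrix.mul_apply, Matrix.transpose_apply,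
      Matrix.diagonal_apply, hD]
    rw [Finset.sum_comm]
    refine Finset.sum_congr rfl fun a _ => ?_
    rw [← Finset.mul_sum, hr3 a, mul_one]
    rw [Finset.sum_mul, Finset.sum_eq_single a (by intro b _ hb; simp [hb]) (by simp)]
    rw [if_pos rfl]; ring
  have hB : Pcpc = M1ᵀ * D * M3 := by
    subst hPcpc
    ext i ℓ
    simp only [Matrix.of_apply, hP, Matrix.mul_apply, Matrix.transpose_apply,
      Matrix.diagonal_apply, hD]
    rw [Finset.sum_comm]
    refine Finset.sum_congr rfl fun a _ => ?_
    have : ∑ j, π a * M1 a i * M2 a j * M3 a ℓ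
        = (∑ j, M2 a j) * (π a * M1 a i * M3 a ℓ) := by
      rw [Finset.sum_mul]; refine Finset.sum_congr rfl fun j _ => ?_; ring
    rw [this, hr2 a, one_mul]
    rw [Finset.sum_mul, Finset.sum_eq_single a (by intro b _ hb; simp [hb]) (by simp)]
    rw [if_pos rfl]; ring
  have hC : Ppcc = M2ᵀ * D * M3 := by
    subst hPpcc
    ext j ℓ
    simp only [Matrix.of_apply, hP, Matrix.mul_apply, Matrix.transpose_apply,
      Matrix.diagonal_apply, hD]
    rw [Finset.sum_comm]
    refine Finset.sum_congr rfl fun a _ => ?_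
    have : ∑ i, π a * M1 a i * M2 a j * M3 a ℓ
        = (∑ i, M1 a i) * (π a * M2 a j * M3 a ℓ) := by
      rw [Finset.sum_mul]; refine Finset.sum_congr rfl fun i _ => ?_; ring
    rw [this, hr1 a, one_mul]
    rw [Finset.sum_mul, Finset.sum_eq_single a (by intro b _ hb; simp [hb]) (by simp)]
    rw [if_pos rfl]; ring
  have hDdet : IsUnit D.det := by
    have := hinv
    rw [hA, Matrix.det_mul, Matrix.det_mul, Matrix.det_transpose] at this
    exact isUnit_of_mul_isUnit_right (isUnit_of_mul_isUnit_left this)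
  have hM1t : IsUnit (M1ᵀ).det := by rwa [Matrix.det_transpose]
  have hkey : Pccp⁻¹ = M2⁻¹ * D⁻¹ * (M1ᵀ)⁻¹ := by
    rw [hA, Matrix.mul_inv_rev, Matrix.mul_inv_rev, Matrix.mul_assoc]
  have hmain : Ppccᵀ * Pccp⁻¹ * Pcpc = M3ᵀ * D * M3 := by
    rw [hC, hkey, hB]
    have hDT : (M2ᵀ * D * M3)ᵀ = M3ᵀ * D * M2 := by
      rw [Matrix.transpose_mul, Matrix.transpose_mul]
      simp [hD, Matrix.diagonal_transpose, Matrix.mul_assoc]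
    rw [hDT]
    rw [show M3ᵀ * D * M2 * (M2⁻¹ * D⁻¹ * M1ᵀ⁻¹) * (M1ᵀ * D * M3)
        = M3ᵀ * D * (M2 * M2⁻¹) * (D⁻¹ * (M1ᵀ⁻¹ * M1ᵀ) * D) * M3 by
      simp only [Matrix.mul_assoc]]
    rw [Matrix.mul_nonsing_inv _ hM2, Matrix.nonsing_inv_mul _ hM1t]
    simp only [Matrix.mul_one]
    rw [Matrix.nonsing_inv_mul _ hDdet, Matrix.mul_one]
  refine ⟨hmain, ?_⟩
  rw [hmain]
  unfold Matrix.IsSymm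
  rw [Matrix.transpose_mul, Matrix.transpose_mul]
  simp [hD, Matrix.diagonal_transpose, Matrix.mul_assoc]
end

section
/- Let P(i,j,ℓ) = Σ_a π_a M1(a,i) M2(a,j) M3(a,ℓ) for invertible complex k×k matrices M1, M2, M3 and π ∈ ℂᵏ with all π_a ≠ 0, and suppose the matrices P_{+··} = M2ᵀ diag(π) M3 and P_{i··} = M2ᵀ diag(π) Λ_{1,i} M3 are formed, where Λ_{1,i} = diag(M1 e_i). Then the matrix A_{1,i} = P_{+··}⁻¹ P_{i··} = M3⁻¹ Λ_{1,i} M3 is similar to the diagonal matrix of entries of the i-th column of M1; in particular the eigenvalues of A_{1,i} (with multiplicity) are exactly the entries of the i-th column of M1. -/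
open Matrix BigOperators Polynomial

lemma charpoly_conj_aux {k : ℕ} (U D : Matrix (Fin k) (Fin k) ℂ)
    (hU : IsUnit U.det) : (U⁻¹ * D * U).charpoly = D.charpoly := by
  have hmap : ∀ A B : Matrix (Fin k) (Fin k) ℂ,
      (A * B).map (C : ℂ →+* ℂ[X]) = A.map C * B.map C := fun A B =>
    Matrix.map_mul
  have h1 : (U⁻¹ * U).map (C : ℂ →+* ℂ[X]) = 1 := by
    rw [Matrix.nonsing_inv_mul _ hU]
    simp
  have h2 : (U * U⁻¹).map (C : ℂ →+* ℂ[X]) = 1 := by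
    rw [Matrix.mul_nonsing_inv _ hU]
    simp
  have hcm : charmatrix (U⁻¹ * D * U)
      = (U⁻¹).map C * charmatrix D * U.map C := by
    simp only [charmatrix, RingHom.mapMatrix_apply]
    rw [mul_sub, sub_mul, ← hmap, ← hmap]
    congr 1
    · have hc : (U⁻¹).map (C : ℂ →+* ℂ[X]) * Matrix.scalar (Fin k) (X : ℂ[X]) * U.map C
          = Matrix.scalar (Fin k) (X : ℂ[X]) * ((U⁻¹).map C * U.map C) := by
        rw [← Matrix.scalar_commute (X : ℂ[X]) (fun r' => Commute.all _ _) ((U⁻¹).map C),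
          mul_assoc]
      rw [hc, ← hmap, h1, mul_one]
  rw [Matrix.charpoly, Matrix.charpoly, hcm, Matrix.det_mul, Matrix.det_mul,
    mul_comm ((U⁻¹).map C).det, mul_assoc, ← Matrix.det_mul, ← hmap, h1,
    Matrix.det_one, mul_one]

theorem stmt_5 (k : ℕ) (π : Fin k → ℂ) (hπ : ∀ a, π a ≠ 0)
    (M1 M2 M3 : Matrix (Fin k) (Fin k) ℂ)
    (hM1 : IsUnit M1.det) (hM2 : IsUnit M2.det) (hM3 : IsUnit M3.det)
    (hr1 : ∀ a, ∑ i, M1 a i = 1)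
    (P : Fin k → Fin k → Fin k → ℂ)
    (hP : ∀ i j ℓ, P i j ℓ = ∑ a, π a * M1 a i * M2 a j * M3 a ℓ)
    (i : Fin k)
    (Ppcc Picc : Matrix (Fin k) (Fin k) ℂ)
    (hPpcc : Ppcc = Matrix.of fun j ℓ => ∑ i', P i' j ℓ)
    (hPicc : Picc = Matrix.of fun j ℓ => P i j ℓ) :
    Ppcc⁻¹ * Picc = M3⁻¹ * Matrix.diagonal (fun a => M1 a i) * M3 ∧
      (Ppcc⁻¹ * Picc).charpoly = (Matrix.diagonal fun a => M1 a i).charpoly := by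
  have hπu : IsUnit (Matrix.diagonal π).det := by
    rw [Matrix.det_diagonal]
    exact IsUnit.mk0 _ (Finset.prod_ne_zero_iff.2 fun a _ => hπ a)
  have hM2t : IsUnit (M2ᵀ).det := by rwa [Matrix.det_transpose]
  have hPp : Ppcc = M2ᵀ * Matrix.diagonal π * M3 := by
    subst hPpcc
    ext j ℓ
    simp only [Matrix.of_apply, Matrix.mul_apply, Matrix.diagonal_apply,
      Matrix.transpose_apply, hP, mul_ite, mul_zero, Finset.sum_ite_eq',
      Finset.mem_univ, if_true]
    rw [Finset.sum_comm]
    refine Finset.sum_congr rfl fun a _ => ?_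
    rw [← Finset.sum_mul, ← Finset.sum_mul, ← Finset.mul_sum, hr1 a, mul_one]
    ring
  have hPi : Picc = M2ᵀ * Matrix.diagonal (fun a => π a * M1 a i) * M3 := by
    subst hPicc
    ext j ℓ
    simp only [Matrix.of_apply, Matrix.mul_apply, Matrix.diagonal_apply,
      Matrix.transpose_apply, hP, mul_ite, mul_zero, Finset.sum_ite_eq',
      Finset.mem_univ, if_true]
    refine Finset.sum_congr rfl fun a _ => ?_
    ring
  have key : Ppcc⁻¹ * Picc = M3⁻¹ * Matrix.diagonal (fun a => M1 a i) * M3 := by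
    rw [hPp, hPi, Matrix.mul_inv_rev, Matrix.mul_inv_rev]
    have hD : (Matrix.diagonal fun a => π a * M1 a i)
        = Matrix.diagonal π * Matrix.diagonal (fun a => M1 a i) :=
      (Matrix.diagonal_mul_diagonal _ _).symm
    rw [hD]
    simp only [Matrix.mul_assoc]
    rw [Matrix.nonsing_inv_mul_cancel_left _ _ hM2t,
      Matrix.nonsing_inv_mul_cancel_left _ _ hπu]
  exact ⟨key, key ▸ charpoly_conj_aux M3 _ hM3⟩
end

section
/- Suppose a k×k×k complex tensor P satisfies P = Diag(𝟙) · (g₁, g₂, g₃) for some g₁, g₂, g₃ ∈ GL(k,ℂ), the entries of P sum to 1, and det(P*ᵢ𝟙) ≠ 0 for i = 1,2,3. Then there exist π ∈ ℂᵏ with nonzero entries summing to 1 and invertible complex matrices M₁, M₂, M₃ each with row sums 1 such that P = Diag(π) · (M₁, M₂, M₃). -/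
/-!
With rⁱ = gᵢ𝟙 the row sums of gᵢ, contracting P = Diag(𝟙)·(g₁, g₂, g₃) over its last index
gives P*₃𝟙 = g₁ᵀ diag(r³) g₂, and likewise for the other two indices. Hence the determinant
hypotheses force every rⁱ to have nonzero entries, and every gᵢ to be invertible. Pulling the
row scalings out, Mᵢ = diag(rⁱ)⁻¹gᵢ has row sums 1 and P = Diag(r¹r²r³)·(M₁, M₂, M₃); summing
all entries of P shows that π = r¹r²r³ sums to 1.
-/

open Matrix BigOperators

/-- The diagonal k×k×k tensor with entries `v i` at positions (i,i,i). -/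
noncomputable def diagT {k : ℕ} (v : Fin k → ℂ) : Fin k → Fin k → Fin k → ℂ :=
  fun i j ℓ => if i = j ∧ j = ℓ then v i else 0

/-- The multilinear action of three matrices on a k×k×k tensor. -/
noncomputable def tAct {k : ℕ} (P : Fin k → Fin k → Fin k → ℂ)
    (g1 g2 g3 : Matrix (Fin k) (Fin k) ℂ) : Fin k → Fin k → Fin k → ℂ :=
  fun i j ℓ => ∑ a, ∑ b, ∑ c, P a b c * g1 a i * g2 b j * g3 c ℓ

section Matrix

variable {ι R : Type*} [Fintype ι] [DecidableEq ι]

theorem Matrix.of_sum_mul_mul_eq_transpose_mul_diagonal_mul [CommSemiring R]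
    (g h : Matrix ι ι R) (d : ι → R) :
    (of fun i j => ∑ a, g a i * h a j * d a) = gᵀ * diagonal d * h := by
  ext i j
  simp only [of_apply, mul_apply, transpose_apply, diagonal_apply, mul_ite, mul_zero,
    Finset.sum_ite_eq', Finset.mem_univ, if_true]
  exact Finset.sum_congr rfl fun a _ => by ring

theorem Matrix.det_ne_zero_of_det_transpose_mul_diagonal_mul [CommRing R] [IsDomain R]
    {g h : Matrix ι ι R} {d : ι → R} (hd : (gᵀ * diagonal d * h).det ≠ 0) :
    g.det ≠ 0 ∧ (∀ a, d a ≠ 0) ∧ h.det ≠ 0 := by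
  rw [det_mul, det_mul, det_transpose, det_diagonal] at hd
  exact ⟨left_ne_zero_of_mul (left_ne_zero_of_mul hd),
    fun a => Finset.prod_ne_zero_iff.mp (right_ne_zero_of_mul (left_ne_zero_of_mul hd)) a
      (Finset.mem_univ a),
    right_ne_zero_of_mul hd⟩

variable [Field R]

theorem Matrix.sum_diagonal_inv_mulVec_one_mul {g : Matrix ι ι R}
    (hg : ∀ a, (g *ᵥ 1) a ≠ 0) (a : ι) : ∑ j, (diagonal (g *ᵥ 1)⁻¹ * g) a j = 1 := by
  simp only [diagonal_mul, Pi.inv_apply, ← Finset.mul_sum]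
  convert inv_mul_cancel₀ (hg a)
  simp [mulVec, dotProduct]

theorem Matrix.isUnit_det_diagonal_inv_mul {g : Matrix ι ι R} {d : ι → R}
    (hd : ∀ a, d a ≠ 0) (hg : g.det ≠ 0) : IsUnit (diagonal d⁻¹ * g).det := by
  rw [det_mul, det_diagonal, isUnit_iff_ne_zero]
  exact mul_ne_zero (Finset.prod_ne_zero_iff.mpr fun a _ => inv_ne_zero (hd a)) hg

theorem Matrix.diagonal_mul_diagonal_inv_mul {g : Matrix ι ι R} {d : ι → R}
    (hd : ∀ a, d a ≠ 0) : diagonal d * (diagonal d⁻¹ * g) = g := by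
  simp [← Matrix.mul_assoc, hd]

end Matrix

variable {k : ℕ}

theorem tAct_diagT_apply (v : Fin k → ℂ) (g1 g2 g3 : Matrix (Fin k) (Fin k) ℂ)
    (i j ℓ : Fin k) :
    tAct (diagT v) g1 g2 g3 i j ℓ = ∑ a, g1 a i * g2 a j * g3 a ℓ * v a := by
  unfold tAct diagT
  refine Finset.sum_congr rfl fun a _ => ?_
  rw [Finset.sum_eq_single a, Finset.sum_eq_single a] <;> intros <;> simp_all [eq_comm]
  ring

theorem tAct_diagT_mul_eq_tAct_diagonal_mul (c1 c2 c3 v : Fin k → ℂ) (g1 g2 g3 : Matrix (Fin k) (Fin k) ℂ) :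
    tAct (diagT (c1 * c2 * c3 * v)) g1 g2 g3 =
      tAct (diagT v) (diagonal c1 * g1) (diagonal c2 * g2) (diagonal c3 * g3) := by
  ext i j ℓ
  simp only [tAct_diagT_apply, diagonal_mul, Pi.mul_apply]
  exact Finset.sum_congr rfl fun a _ => by ring

theorem tAct_diagT_apply_rotate (v : Fin k → ℂ) (g1 g2 g3 : Matrix (Fin k) (Fin k) ℂ)
    (i j ℓ : Fin k) : tAct (diagT v) g1 g2 g3 i j ℓ = tAct (diagT v) g2 g3 g1 j ℓ i := by
  simp only [tAct_diagT_apply]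
  exact Finset.sum_congr rfl fun a _ => by ring

theorem tAct_diagT_apply_swap (v : Fin k → ℂ) (g1 g2 g3 : Matrix (Fin k) (Fin k) ℂ)
    (i j ℓ : Fin k) : tAct (diagT v) g1 g2 g3 i j ℓ = tAct (diagT v) g1 g3 g2 i ℓ j := by
  simp only [tAct_diagT_apply]
  exact Finset.sum_congr rfl fun a _ => by ring

theorem of_sum_tAct_diagT_right (v : Fin k → ℂ) (g1 g2 g3 : Matrix (Fin k) (Fin k) ℂ) :
    (of fun i j => ∑ ℓ, tAct (diagT v) g1 g2 g3 i j ℓ) =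
      g1ᵀ * diagonal ((g3 *ᵥ 1) * v) * g2 := by
  rw [← of_sum_mul_mul_eq_transpose_mul_diagonal_mul]
  ext i j
  simp only [of_apply, tAct_diagT_apply, Pi.mul_apply, mulVec, dotProduct, Pi.one_apply,
    mul_one]
  rw [Finset.sum_comm]
  refine Finset.sum_congr rfl fun a _ => ?_
  rw [Finset.sum_mul, Finset.mul_sum]
  exact Finset.sum_congr rfl fun _ _ => by ring

theorem of_sum_tAct_diagT_middle (v : Fin k → ℂ) (g1 g2 g3 : Matrix (Fin k) (Fin k) ℂ) :
    (of fun i ℓ => ∑ j, tAct (diagT v) g1 g2 g3 i j ℓ) =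
      g1ᵀ * diagonal ((g2 *ᵥ 1) * v) * g3 := by
  simp only [tAct_diagT_apply_swap v g1 g2 g3]
  exact of_sum_tAct_diagT_right v g1 g3 g2

theorem of_sum_tAct_diagT_left (v : Fin k → ℂ) (g1 g2 g3 : Matrix (Fin k) (Fin k) ℂ) :
    (of fun j ℓ => ∑ i, tAct (diagT v) g1 g2 g3 i j ℓ) =
      g2ᵀ * diagonal ((g1 *ᵥ 1) * v) * g3 := by
  simp only [tAct_diagT_apply_rotate v g1 g2 g3]
  exact of_sum_tAct_diagT_right v g2 g3 g1

theorem sum_tAct_diagT (v : Fin k → ℂ) (g1 g2 g3 : Matrix (Fin k) (Fin k) ℂ) :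
    ∑ i, ∑ j, ∑ ℓ, tAct (diagT v) g1 g2 g3 i j ℓ =
      ∑ a, ((g1 *ᵥ 1) * (g2 *ᵥ 1) * (g3 *ᵥ 1) * v) a := by
  simp only [tAct_diagT_apply]
  conv_lhs => enter [2, i, 2, j]; rw [Finset.sum_comm]
  conv_lhs => enter [2, i]; rw [Finset.sum_comm]
  rw [Finset.sum_comm]
  refine Finset.sum_congr rfl fun a _ => ?_
  simp only [Pi.mul_apply, mulVec, dotProduct, Pi.one_apply, mul_one, ← Finset.mul_sum,
    ← Finset.sum_mul]

theorem stmt_15_general (k : ℕ) (P : Fin k → Fin k → Fin k → ℂ)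
    (g1 g2 g3 : Matrix (Fin k) (Fin k) ℂ)
    (hP : P = tAct (diagT (fun _ => 1)) g1 g2 g3)
    (hsum : ∑ i, ∑ j, ∑ ℓ, P i j ℓ = 1)
    (hm1 : (Matrix.of fun j ℓ => ∑ i, P i j ℓ).det ≠ 0)
    (hm2 : (Matrix.of fun i ℓ => ∑ j, P i j ℓ).det ≠ 0)
    (hm3 : (Matrix.of fun i j => ∑ ℓ, P i j ℓ).det ≠ 0) :
    ∃ (π : Fin k → ℂ) (M1 M2 M3 : Matrix (Fin k) (Fin k) ℂ),
      (∀ a, π a ≠ 0) ∧ ∑ a, π a = 1 ∧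
      IsUnit M1.det ∧ IsUnit M2.det ∧ IsUnit M3.det ∧
      (∀ a, ∑ i, M1 a i = 1) ∧ (∀ a, ∑ j, M2 a j = 1) ∧ (∀ a, ∑ ℓ, M3 a ℓ = 1) ∧
      P = tAct (diagT π) M1 M2 M3 := by
  change P = tAct (diagT 1) g1 g2 g3 at hP
  subst hP
  rw [of_sum_tAct_diagT_left, mul_one] at hm1
  rw [of_sum_tAct_diagT_middle, mul_one] at hm2
  rw [of_sum_tAct_diagT_right, mul_one] at hm3
  obtain ⟨-, hr1, hg3⟩ := det_ne_zero_of_det_transpose_mul_diagonal_mul hm1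
  obtain ⟨-, hr2, -⟩ := det_ne_zero_of_det_transpose_mul_diagonal_mul hm2
  obtain ⟨hg1, hr3, hg2⟩ := det_ne_zero_of_det_transpose_mul_diagonal_mul hm3
  refine ⟨(g1 *ᵥ 1) * (g2 *ᵥ 1) * (g3 *ᵥ 1), diagonal (g1 *ᵥ 1)⁻¹ * g1,
    diagonal (g2 *ᵥ 1)⁻¹ * g2, diagonal (g3 *ᵥ 1)⁻¹ * g3,
    fun a => mul_ne_zero (mul_ne_zero (hr1 a) (hr2 a)) (hr3 a), ?_,
    isUnit_det_diagonal_inv_mul hr1 hg1, isUnit_det_diagonal_inv_mul hr2 hg2,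
    isUnit_det_diagonal_inv_mul hr3 hg3, sum_diagonal_inv_mulVec_one_mul hr1,
    sum_diagonal_inv_mulVec_one_mul hr2, sum_diagonal_inv_mulVec_one_mul hr3, ?_⟩
  · rwa [sum_tAct_diagT, mul_one] at hsum
  · rw [← mul_one ((g1 *ᵥ 1) * (g2 *ᵥ 1) * (g3 *ᵥ 1)), tAct_diagT_mul_eq_tAct_diagonal_mul,
      diagonal_mul_diagonal_inv_mul hr1, diagonal_mul_diagonal_inv_mul hr2,
      diagonal_mul_diagonal_inv_mul hr3]

theorem stmt_15 (k : ℕ) (P : Fin k → Fin k → Fin k → ℂ)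
    (g1 g2 g3 : Matrix (Fin k) (Fin k) ℂ)
    (h1 : IsUnit g1.det) (h2 : IsUnit g2.det) (h3 : IsUnit g3.det)
    (hP : P = tAct (diagT (fun _ => 1)) g1 g2 g3)
    (hsum : ∑ i, ∑ j, ∑ ℓ, P i j ℓ = 1)
    (hm1 : (Matrix.of fun j ℓ => ∑ i, P i j ℓ).det ≠ 0)
    (hm2 : (Matrix.of fun i ℓ => ∑ j, P i j ℓ).det ≠ 0)
    (hm3 : (Matrix.of fun i j => ∑ ℓ, P i j ℓ).det ≠ 0) :
    ∃ (π : Fin k → ℂ) (M1 M2 M3 : Matrix (Fin k) (Fin k) ℂ),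
      (∀ a, π a ≠ 0) ∧ ∑ a, π a = 1 ∧
      IsUnit M1.det ∧ IsUnit M2.det ∧ IsUnit M3.det ∧
      (∀ a, ∑ i, M1 a i = 1) ∧ (∀ a, ∑ j, M2 a j = 1) ∧ (∀ a, ∑ ℓ, M3 a ℓ = 1) ∧
      P = tAct (diagT π) M1 M2 M3 :=
  stmt_15_general k P g1 g2 g3 hP hsum hm1 hm2 hm3
end

section
/- Let P be a 4-index k×k×k×k tensor arising as P(i,j,ℓ,m) = Σ_{a,b} π_a M₅(a,b) M₁(a,i) M₂(a,j) M₃(b,ℓ) M₄(b,m), i.e., from parameters on the 4-leaf tree 12|34 with root distribution π, internal edge matrix M₅, and leaf edge matrices M₁,…,M₄. Then the flattening Flat_{13|24}(P̃) of the modified tensor P̃ in which M₂ is replaced by M₁ and M₃ is replaced by M₄ equals AᵀDA, where A = M₁ ⊗ M₄ is the Kronecker product and D is the k²×k² diagonal matrix whose diagonal entries are the entries of diag(π)M₅. In particular, if M₁ and M₄ are invertible and π has positive entries, then Flat_{13|24}(P̃) is positive semidefinite if and only if all entries of M₅ are nonnegative. -/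
open Matrix BigOperators Kronecker

theorem stmt_19 (k : ℕ) (π : Fin k → ℝ)
    (M1 M4 M5 : Matrix (Fin k) (Fin k) ℝ)
    (Pt : Fin k → Fin k → Fin k → Fin k → ℝ)
    (hPt : ∀ i j ℓ m, Pt i j ℓ m =
      ∑ a, ∑ b, π a * M5 a b * M1 a i * M1 a j * M4 b ℓ * M4 b m)
    (Flat : Matrix (Fin k × Fin k) (Fin k × Fin k) ℝ)
    (hFlat : Flat = Matrix.of fun p q => Pt p.1 q.1 p.2 q.2) :
    Flat = (M1 ⊗ₖ M4)ᵀ *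
        Matrix.diagonal (fun ab : Fin k × Fin k => π ab.1 * M5 ab.1 ab.2) *
        (M1 ⊗ₖ M4) ∧
      (IsUnit M1.det → IsUnit M4.det → (∀ a, 0 < π a) →
        (Flat.PosSemidef ↔ ∀ a b, 0 ≤ M5 a b)) := by
  have hAT : (M1 ⊗ₖ M4)ᴴ = (M1 ⊗ₖ M4)ᵀ :=
    Matrix.conjTranspose_eq_transpose_of_trivial _
  have heq : Flat = (M1 ⊗ₖ M4)ᵀ *
      Matrix.diagonal (fun ab : Fin k × Fin k => π ab.1 * M5 ab.1 ab.2) *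
      (M1 ⊗ₖ M4) := by
    rw [Matrix.mul_assoc]
    ext ⟨i, l⟩ ⟨j, m⟩
    rw [Matrix.mul_apply]
    simp only [hFlat, Matrix.of_apply, hPt, Matrix.transpose_apply,
      Matrix.diagonal_mul, Fintype.sum_prod_type, kroneckerMap_apply]
    refine Finset.sum_congr rfl fun a _ => Finset.sum_congr rfl fun b _ => ?_
    ring
  refine ⟨heq, fun h1 h4 hπ => ?_⟩
  have hA : IsUnit (M1 ⊗ₖ M4).det := by
    rw [Matrix.det_kronecker]
    exact (h1.pow _).mul (h4.pow _)
  constructor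
  · intro hPSD
    have hD : (Matrix.diagonal (fun ab : Fin k × Fin k => π ab.1 * M5 ab.1 ab.2)).PosSemidef := by
      have h := hPSD.conjTranspose_mul_mul_same (M1 ⊗ₖ M4)⁻¹
      rw [heq, (M1 ⊗ₖ M4)⁻¹.conjTranspose_eq_transpose_of_trivial,
        Matrix.transpose_nonsing_inv] at h
      rwa [Matrix.mul_assoc, Matrix.mul_assoc, Matrix.mul_nonsing_inv _ hA,
        Matrix.mul_one, ← Matrix.mul_assoc,
        Matrix.nonsing_inv_mul _ (by rwa [Matrix.det_transpose]), Matrix.one_mul] at h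
    intro a b
    have h := Matrix.posSemidef_diagonal_iff.mp hD (a, b)
    nlinarith [hπ a]
  · intro h5
    have hD : (Matrix.diagonal (fun ab : Fin k × Fin k => π ab.1 * M5 ab.1 ab.2)).PosSemidef :=
      Matrix.posSemidef_diagonal_iff.mpr fun ab => mul_nonneg (hπ ab.1).le (h5 ab.1 ab.2)
    have h := hD.conjTranspose_mul_mul_same (M1 ⊗ₖ M4)
    rw [hAT] at h
    rwa [heq]
end
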